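/- Let u : ℝ³ → ℝ be a C³ solution of u_yy = u_tx + u_y·u_xx − u_x·u_xy, and let T : ℝ → ℝ be a C⁴ function of t. Then the function v(t,x,y) := T(t)·u_t + T′(t)·(x·u_x + y·u_y − u) + (1/2)·T″(t)·(y²·u_x − 2xy) − (1/6)·T‴(t)·y³ satisfies the linearized equation v_yy = v_tx + u_y·v_xx + u_xx·v_y − u_x·v_xy − u_xy·v_x at every point of ℝ³. -/

import Mathlib

/-!
Write `E = u_yy - u_tx - u_y u_xx + u_x u_xy` for the Mikhalev residual of `u`. For every `C³`
function `u`, expanding the linearized operator on `θ₅(T)` and using the symmetry of mixed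
partials gives the identity
`L_u θ₅(T) = T E_t + T' (E + x E_x + y E_y) + ½ T'' y² E_x`,
in which all terms with `T'''` cancel. When `u` solves the equation, `E` vanishes identically,
hence so do its partial derivatives, and `θ₅(T)` solves the linearized equation.
-/

/-- Partial derivative of `f : ℝ³ → ℝ` in the direction `v`. -/
noncomputable def pd3 (v : ℝ × ℝ × ℝ) (f : ℝ × ℝ × ℝ → ℝ) : ℝ × ℝ × ℝ → ℝ :=
  fun p => fderiv ℝ f p v

noncomputable def dt : (ℝ × ℝ × ℝ → ℝ) → ℝ × ℝ × ℝ → ℝ := pd3 (1, 0, 0)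
noncomputable def dx : (ℝ × ℝ × ℝ → ℝ) → ℝ × ℝ × ℝ → ℝ := pd3 (0, 1, 0)
noncomputable def dy : (ℝ × ℝ × ℝ → ℝ) → ℝ × ℝ × ℝ → ℝ := pd3 (0, 0, 1)

section PartialDerivatives

variable {f g : ℝ × ℝ × ℝ → ℝ} {p v : ℝ × ℝ × ℝ}

theorem contDiff_pd3 {n : WithTop ℕ∞} (hf : ContDiff ℝ (n + 1) f) (v : ℝ × ℝ × ℝ) :
    ContDiff ℝ n (pd3 v f) :=
  (hf.fderiv_right le_rfl).clm_apply contDiff_const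

theorem differentiable_pd3 (hf : ContDiff ℝ 2 f) (v : ℝ × ℝ × ℝ) :
    Differentiable ℝ (pd3 v f) :=
  (contDiff_pd3 hf v).differentiable one_ne_zero

theorem pd3_const (c : ℝ) : pd3 v (fun _ => c) p = 0 := by
  simp [pd3]

theorem pd3_add (hf : DifferentiableAt ℝ f p) (hg : DifferentiableAt ℝ g p) :
    pd3 v (fun q => f q + g q) p = pd3 v f p + pd3 v g p := by
  simp [pd3, fderiv_fun_add hf hg]

theorem pd3_sub (hf : DifferentiableAt ℝ f p) (hg : DifferentiableAt ℝ g p) :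
    pd3 v (fun q => f q - g q) p = pd3 v f p - pd3 v g p := by
  simp [pd3, fderiv_fun_sub hf hg]

theorem pd3_mul (hf : DifferentiableAt ℝ f p) (hg : DifferentiableAt ℝ g p) :
    pd3 v (fun q => f q * g q) p = pd3 v f p * g p + f p * pd3 v g p := by
  simp [pd3, fderiv_fun_mul hf hg]
  ring

theorem pd3_pow (hf : DifferentiableAt ℝ f p) (n : ℕ) :
    pd3 v (fun q => f q ^ n) p = n * f p ^ (n - 1) * pd3 v f p := by
  simp [pd3, fderiv_fun_pow n hf]

theorem pd3_comp_fst {T : ℝ → ℝ} (hT : DifferentiableAt ℝ T p.1) :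
    pd3 v (fun q => T q.1) p = deriv T p.1 * v.1 := by
  simp [pd3, fderiv_fun_comp p hT differentiableAt_fst, fderiv_fst, mul_comm]

theorem pd3_fst_snd : pd3 v (fun q => q.2.1) p = v.2.1 := by
  have h : DifferentiableAt ℝ (Prod.snd : ℝ × ℝ × ℝ → ℝ × ℝ) p := differentiableAt_snd
  simp [pd3, fderiv.fst h, fderiv_snd]

theorem pd3_snd_snd : pd3 v (fun q => q.2.2) p = v.2.2 := by
  have h : DifferentiableAt ℝ (Prod.snd : ℝ × ℝ × ℝ → ℝ × ℝ) p := differentiableAt_snd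
  simp [pd3, fderiv.snd h, fderiv_snd]

theorem pd3_comm (hf : ContDiff ℝ 2 f) (a b : ℝ × ℝ × ℝ) :
    pd3 a (pd3 b f) = pd3 b (pd3 a f) := by
  have hd : Differentiable ℝ (fderiv ℝ f) := (hf.fderiv_right le_rfl).differentiable one_ne_zero
  have hsnd : ∀ c d q, pd3 c (pd3 d f) q = fderiv ℝ (fderiv ℝ f) q c d := fun c d q => by
    change fderiv ℝ (fun q => fderiv ℝ f q d) q c = _
    simp [fderiv_clm_apply (hd q) (differentiableAt_const d)]
  funext q
  rw [hsnd, hsnd, hf.contDiffAt.isSymmSndFDerivAt (by simp [minSmoothness_of_isRCLikeNormedField])]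

theorem differentiable_partials_of_contDiff_three (hf : ContDiff ℝ 3 f) :
    Differentiable ℝ f ∧ (∀ a, Differentiable ℝ (pd3 a f)) ∧
      ∀ a b, Differentiable ℝ (pd3 a (pd3 b f)) :=
  ⟨hf.differentiable (by norm_num), differentiable_pd3 (hf.of_le (by norm_num)),
    fun a b => differentiable_pd3 (contDiff_pd3 (n := 2) hf b) a⟩

end PartialDerivatives

theorem differentiable_derivs_of_contDiff_four {T : ℝ → ℝ} (hT : ContDiff ℝ 4 T) :
    Differentiable ℝ T ∧ Differentiable ℝ (deriv T) ∧ Differentiable ℝ (deriv (deriv T)) ∧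
      Differentiable ℝ (deriv (deriv (deriv T))) := by
  have hT₁ : ContDiff ℝ 3 (deriv T) := hT.deriv' (n := 3)
  have hT₂ : ContDiff ℝ 2 (deriv (deriv T)) := hT₁.deriv' (n := 2)
  exact ⟨hT.differentiable (by norm_num), hT₁.differentiable (by norm_num),
    hT₂.differentiable (by norm_num), hT₂.differentiable_deriv_two⟩

noncomputable def mikhalevResidual (u : ℝ × ℝ × ℝ → ℝ) : ℝ × ℝ × ℝ → ℝ := fun q =>
  dy (dy u) q - dt (dx u) q - dy u q * dx (dx u) q + dx u q * dx (dy u) q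

noncomputable def linearizedMikhalev (u v : ℝ × ℝ × ℝ → ℝ) : ℝ × ℝ × ℝ → ℝ := fun q =>
  dy (dy v) q - dt (dx v) q - dy u q * dx (dx v) q - dx (dx u) q * dy v q
    + dx u q * dx (dy v) q + dx (dy u) q * dx v q

noncomputable def theta5 (u : ℝ × ℝ × ℝ → ℝ) (T : ℝ → ℝ) : ℝ × ℝ × ℝ → ℝ := fun q =>
  T q.1 * dt u q
    + deriv T q.1 * (q.2.1 * dx u q + q.2.2 * dy u q - u q)
    + (1 / 2) * deriv (deriv T) q.1 * (q.2.2 ^ 2 * dx u q - 2 * q.2.1 * q.2.2)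
    - (1 / 6) * deriv (deriv (deriv T)) q.1 * q.2.2 ^ 3

section Theta5

variable {u : ℝ × ℝ × ℝ → ℝ} {T : ℝ → ℝ}

theorem dx_theta5 (hu : ContDiff ℝ 3 u) (hT : ContDiff ℝ 4 T) :
    dx (theta5 u T) = fun q => T q.1 * dt (dx u) q
      + deriv T q.1 * (q.2.1 * dx (dx u) q + q.2.2 * dx (dy u) q)
      + 1 / 2 * deriv (deriv T) q.1 * (q.2.2 ^ 2 * dx (dx u) q - 2 * q.2.2) := by
  obtain ⟨hu₀, hu₁, -⟩ := differentiable_partials_of_contDiff_three hu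
  obtain ⟨hT₀, hT₁, hT₂, hT₃⟩ := differentiable_derivs_of_contDiff_four hT
  funext q
  unfold theta5
  simp only [dt, dx, dy]
  simp (disch := fun_prop) only [pd3_add, pd3_sub, pd3_mul, pd3_pow, pd3_const, pd3_comp_fst,
    pd3_fst_snd, pd3_snd_snd, pd3_comm (hu.of_le (by norm_num)) (0, 1, 0) (1, 0, 0)]
  ring

theorem dy_theta5 (hu : ContDiff ℝ 3 u) (hT : ContDiff ℝ 4 T) :
    dy (theta5 u T) = fun q => T q.1 * dt (dy u) q
      + deriv T q.1 * (q.2.1 * dx (dy u) q + q.2.2 * dy (dy u) q)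
      + 1 / 2 * deriv (deriv T) q.1 * (2 * q.2.2 * dx u q + q.2.2 ^ 2 * dx (dy u) q - 2 * q.2.1)
      - 1 / 2 * deriv (deriv (deriv T)) q.1 * q.2.2 ^ 2 := by
  obtain ⟨hu₀, hu₁, -⟩ := differentiable_partials_of_contDiff_three hu
  obtain ⟨hT₀, hT₁, hT₂, hT₃⟩ := differentiable_derivs_of_contDiff_four hT
  have comm := pd3_comm (hu.of_le (by norm_num))
  funext q
  unfold theta5
  simp only [dt, dx, dy]
  simp (disch := fun_prop) only [pd3_add, pd3_sub, pd3_mul, pd3_pow, pd3_const, pd3_comp_fst,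
    pd3_fst_snd, pd3_snd_snd, comm (0, 0, 1) (1, 0, 0), comm (0, 0, 1) (0, 1, 0)]
  ring

theorem linearizedMikhalev_theta5 (hu : ContDiff ℝ 3 u) (hT : ContDiff ℝ 4 T) (p : ℝ × ℝ × ℝ) :
    linearizedMikhalev u (theta5 u T) p =
      T p.1 * dt (mikhalevResidual u) p
        + deriv T p.1 * (mikhalevResidual u p + p.2.1 * dx (mikhalevResidual u) p
          + p.2.2 * dy (mikhalevResidual u) p)
        + 1 / 2 * deriv (deriv T) p.1 * p.2.2 ^ 2 * dx (mikhalevResidual u) p := by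
  obtain ⟨-, hu₁, hu₂⟩ := differentiable_partials_of_contDiff_three hu
  obtain ⟨hT₀, hT₁, hT₂, hT₃⟩ := differentiable_derivs_of_contDiff_four hT
  -- mixed partials are normalised to the order `t, x, y` from the outside in
  have comm₂ := pd3_comm (hu.of_le (by norm_num))
  have comm₃ := fun a b c => pd3_comm (contDiff_pd3 (n := 2) hu c) a b
  rw [linearizedMikhalev, dx_theta5 hu hT, dy_theta5 hu hT]
  unfold mikhalevResidual
  simp only [dt, dx, dy]
  simp (disch := fun_prop) only [pd3_add, pd3_sub, pd3_mul, pd3_pow, pd3_const, pd3_comp_fst,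
    pd3_fst_snd, pd3_snd_snd, comm₂ (0, 0, 1) (0, 1, 0), comm₃ (0, 1, 0) (1, 0, 0),
    comm₃ (0, 0, 1) (1, 0, 0), comm₃ (0, 0, 1) (0, 1, 0)]
  ring

end Theta5

theorem theta5_is_symmetry (u : ℝ × ℝ × ℝ → ℝ) (hu : ContDiff ℝ 3 u)
    (T : ℝ → ℝ) (hT : ContDiff ℝ 4 T)
    (heq : ∀ p : ℝ × ℝ × ℝ,
      dy (dy u) p = dt (dx u) p + dy u p * dx (dx u) p - dx u p * dx (dy u) p) :
    ∀ p : ℝ × ℝ × ℝ,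
      (fun v : ℝ × ℝ × ℝ → ℝ =>
        dy (dy v) p = dt (dx v) p + dy u p * dx (dx v) p + dx (dx u) p * dy v p
          - dx u p * dx (dy v) p - dx (dy u) p * dx v p)
      (fun q => T q.1 * dt u q
        + deriv T q.1 * (q.2.1 * dx u q + q.2.2 * dy u q - u q)
        + (1 / 2) * deriv (deriv T) q.1 * (q.2.2 ^ 2 * dx u q - 2 * q.2.1 * q.2.2)
        - (1 / 6) * deriv (deriv (deriv T)) q.1 * q.2.2 ^ 3) := by
  intro p
  have hres : mikhalevResidual u = fun _ => 0 := by
    funext q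
    rw [mikhalevResidual, heq q]
    ring
  have hL : linearizedMikhalev u (theta5 u T) p = 0 := by
    simp [linearizedMikhalev_theta5 hu hT p, hres, dt, dx, dy, pd3_const]
  unfold linearizedMikhalev theta5 at hL
  linear_combination hL
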